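/- Let K be a field, d a nonnegative integer, and ξ_0, ξ_1, …, ξ_d mutually distinct scalars in K. For 0≤i≤d define the polynomials τ_i(λ) = (λ−ξ_0)(λ−ξ_1)⋯(λ−ξ_{i−1}) and η_i(λ) = (λ−ξ_d)(λ−ξ_{d−1})⋯(λ−ξ_{d−i+1}) in K[λ], with empty products interpreted as 1. Then τ_d = Σ_{i=0}^{d} τ_{d−i}(ξ_d) η_i and η_d = Σ_{i=0}^{d} η_{d−i}(ξ_0) τ_i in K[λ]. -/
import Mathlib


open Polynomial Matrix Finset

noncomputable section


/-- `τ_i(λ) = (λ - ξ_0)(λ - ξ_1)⋯(λ - ξ_{i-1})`. -/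
def tauPoly {K : Type*} [Field K] (ξ : ℕ → K) (i : ℕ) : Polynomial K :=
  ∏ k ∈ Finset.range i, (Polynomial.X - Polynomial.C (ξ k))

/-- `η_i(λ) = (λ - ξ_d)(λ - ξ_{d-1})⋯(λ - ξ_{d-i+1})`. -/
def etaPoly {K : Type*} [Field K] (d : ℕ) (ξ : ℕ → K) (i : ℕ) : Polynomial K :=
  ∏ k ∈ Finset.range i, (Polynomial.X - Polynomial.C (ξ (d - k)))

lemma newtonAux {K : Type*} [Field K] (ξ : ℕ → K) (z : K) (n : ℕ) :
    tauPoly ξ n = Polynomial.C ((tauPoly ξ n).eval z) +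
      (Polynomial.X - Polynomial.C z) *
        ∑ j ∈ Finset.range n, Polynomial.C ((tauPoly ξ (n - 1 - j)).eval z) *
          ∏ k ∈ Finset.range j, (Polynomial.X - Polynomial.C (ξ (n - 1 - k))) := by
  induction n with
  | zero => simp [tauPoly]
  | succ n ih =>
    have h1 : tauPoly ξ (n + 1) = tauPoly ξ n * (X - C (ξ n)) := by
      rw [tauPoly, tauPoly, Finset.prod_range_succ]
    have hs : ∑ j ∈ Finset.range (n + 1),
          Polynomial.C ((tauPoly ξ (n + 1 - 1 - j)).eval z) *
            ∏ k ∈ Finset.range j, (Polynomial.X - Polynomial.C (ξ (n + 1 - 1 - k)))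
        = Polynomial.C ((tauPoly ξ n).eval z) +
          (X - C (ξ n)) * ∑ j ∈ Finset.range n,
            Polynomial.C ((tauPoly ξ (n - 1 - j)).eval z) *
              ∏ k ∈ Finset.range j, (Polynomial.X - Polynomial.C (ξ (n - 1 - k))) := by
      rw [Finset.sum_range_succ']
      have hterm : ∀ j, Polynomial.C ((tauPoly ξ (n + 1 - 1 - (j + 1))).eval z) *
            ∏ k ∈ Finset.range (j + 1), (Polynomial.X - Polynomial.C (ξ (n + 1 - 1 - k)))
          = (X - C (ξ n)) * (Polynomial.C ((tauPoly ξ (n - 1 - j)).eval z) *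
              ∏ k ∈ Finset.range j, (Polynomial.X - Polynomial.C (ξ (n - 1 - k)))) := by
        intro j
        simp only [Nat.add_sub_cancel]
        rw [Finset.prod_range_succ', show n - (j + 1) = n - 1 - j by omega, Nat.sub_zero]
        have e2 : ∀ k ∈ Finset.range j, (Polynomial.X - Polynomial.C (ξ (n - (k + 1)))) =
            (Polynomial.X - Polynomial.C (ξ (n - 1 - k))) := by
          intro k _
          rw [show n - (k + 1) = n - 1 - k by omega]
        rw [Finset.prod_congr rfl e2]
        ring
      simp only [hterm]
      rw [← Finset.mul_sum]
      simp [tauPoly]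
      ring
    rw [h1]
    conv_lhs => rw [ih]
    rw [hs]
    have he : (tauPoly ξ n * (X - C (ξ n))).eval z = (tauPoly ξ n).eval z * (z - ξ n) := by
      simp
    rw [he, Polynomial.C_mul, Polynomial.C_sub]
    ring

theorem tau_eta_transition (d : ℕ) {K : Type*} [Field K] (ξ : ℕ → K)
    (hξ : ∀ i ≤ d, ∀ j ≤ d, ξ i = ξ j → i = j) :
    tauPoly ξ d = ∑ i ∈ Finset.range (d + 1),
        Polynomial.C ((tauPoly ξ (d - i)).eval (ξ d)) * etaPoly d ξ i
    ∧ etaPoly d ξ d = ∑ i ∈ Finset.range (d + 1),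
        Polynomial.C ((etaPoly d ξ (d - i)).eval (ξ 0)) * tauPoly ξ i := by
  constructor
  · rw [Finset.sum_range_succ']
    have hterm : ∀ i ∈ Finset.range d,
        Polynomial.C ((tauPoly ξ (d - (i + 1))).eval (ξ d)) * etaPoly d ξ (i + 1)
        = (X - C (ξ d)) * (Polynomial.C ((tauPoly ξ (d - 1 - i)).eval (ξ d)) *
            ∏ k ∈ Finset.range i, (Polynomial.X - Polynomial.C (ξ (d - 1 - k)))) := by
      intro i hi
      rw [etaPoly, Finset.prod_range_succ', show d - (i + 1) = d - 1 - i by omega,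
        Nat.sub_zero]
      have e2 : ∀ k ∈ Finset.range i, (Polynomial.X - Polynomial.C (ξ (d - (k + 1)))) =
          (Polynomial.X - Polynomial.C (ξ (d - 1 - k))) := by
        intro k _
        rw [show d - (k + 1) = d - 1 - k by omega]
      rw [Finset.prod_congr rfl e2]
      ring
    rw [Finset.sum_congr rfl hterm, ← Finset.mul_sum]
    have h0 : Polynomial.C ((tauPoly ξ (d - 0)).eval (ξ d)) * etaPoly d ξ 0
        = Polynomial.C ((tauPoly ξ d).eval (ξ d)) := by
      simp only [Nat.sub_zero, etaPoly, Finset.range_zero, Finset.prod_empty, mul_one]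
    rw [h0]
    rw [add_comm]
    exact newtonAux ξ (ξ d) d
  · have hEq : etaPoly d ξ = tauPoly (fun k => ξ (d - k)) := rfl
    rw [hEq]
    rw [Finset.sum_range_succ']
    have hterm : ∀ i ∈ Finset.range d,
        Polynomial.C ((tauPoly (fun k => ξ (d - k)) (d - (i + 1))).eval (ξ 0)) * tauPoly ξ (i + 1)
        = (X - C (ξ 0)) * (Polynomial.C ((tauPoly (fun k => ξ (d - k)) (d - 1 - i)).eval (ξ 0)) *
            ∏ k ∈ Finset.range i, (Polynomial.X - Polynomial.C (ξ (d - (d - 1 - k))))) := by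
      intro i hi
      simp only [Finset.mem_range] at hi
      have ht : tauPoly ξ (i + 1) = (Polynomial.X - Polynomial.C (ξ 0)) *
          ∏ k ∈ Finset.range i, (Polynomial.X - Polynomial.C (ξ (k + 1))) := by
        rw [tauPoly, Finset.prod_range_succ', mul_comm]
      rw [ht, show d - (i + 1) = d - 1 - i by omega]
      have e2 : ∀ k ∈ Finset.range i, (Polynomial.X - Polynomial.C (ξ (k + 1)))
          = (Polynomial.X - Polynomial.C (ξ (d - (d - 1 - k)))) := by
        intro k hk
        simp only [Finset.mem_range] at hk
        have : d - (d - 1 - k) = k + 1 := by omega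
        rw [this]
      rw [Finset.prod_congr rfl e2]
      ring
    rw [Finset.sum_congr rfl hterm, ← Finset.mul_sum]
    have h0 : Polynomial.C ((tauPoly (fun k => ξ (d - k)) (d - 0)).eval (ξ 0)) * tauPoly ξ 0
        = Polynomial.C ((tauPoly (fun k => ξ (d - k)) d).eval (ξ 0)) := by
      simp only [Nat.sub_zero, tauPoly, Finset.range_zero, Finset.prod_empty, mul_one]
    rw [h0, add_comm]
    have := newtonAux (fun k => ξ (d - k)) (ξ 0) d
    exact this
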